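/- arXiv:1604.08417 — 3 statements merged into one kernel-verified Lean document; each statement's English description precedes it below -/
import Mathlib

section
/- Let Z be a smooth variety of odd dimension n over an algebraically closed field k of characteristic p = 2, m even, and let s ∈ H^0(Z, L^m) have an admissible critical point at q ∈ Z. Let P ∈ X = Z[ᵐ√s] be a singular point with π(P) = q, and let γ_e y^{ed} + ⋯ + γ_2 y^{2d} + y^d + q(x) + f = 0 be the local defining equation of the germ P ∈ X, with q(x) = βx_1² + x_2x_3 + x_4x_5 + ⋯ + x_{n-1}x_n. If d > 2, then β ≠ 0, i.e. x_1² appears in q(x) with nonzero coefficient. -/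
/-!
# Statement 6

Let `Z` be a smooth variety of odd dimension `n` over an algebraically closed field of
characteristic `2`, `m` even, and let `s ∈ H⁰(Z, L^m)` have an *admissible* critical point
at `q ∈ Z`.  Let `P ∈ X = Z[ᵐ√s]` be a singular point over `q` and let
`γ_e y^{ed} + ⋯ + γ_2 y^{2d} + y^d + q(x) + f = 0`, with
`q(x) = β x_1² + x_2x_3 + ⋯ + x_{n-1}x_n`, be the local defining equation of the germ
`P ∈ X`.  If `d > 2` then `β ≠ 0`.

We work on a trivializing local chart centered at `q`, where `s` corresponds to the
polynomial `g = α + β₀x_1² + x_2x_3 + ⋯ + x_{n-1}x_n + f₀` (almost nondegenerate critical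
point in normal form), and `X = (y^m - g = 0) ⊆ 𝔸^{n+1}`.  The associated quadric
`T(s,q) ⊂ P^{n-1}` is the projective quadric cut out by the quadratic part of `g`;
admissibility requires it to be nonsingular whenever `4 ∣ m`, or whenever `m ≠ 2` and `s`
is singular at `q` (i.e. `α = 0`).  The local defining equation of the germ `P ∈ X` is
expressed via a coordinate change `φ` centered at `P`, as in Lemma 3.4 of the paper.
-/

open MvPolynomial

/-- The standard quadratic form: `x_1x_2 + x_3x_4 + ⋯ + x_{n-1}x_n` for `n` even, and
`β x_1² + x_2x_3 + x_4x_5 + ⋯ + x_{n-1}x_n` for `n` odd. -/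
noncomputable def stdQuad (k : Type*) [CommRing k] (n : ℕ) (β : k) :
    MvPolynomial (Fin n) k :=
  (∑ i : Fin (n / 2),
      X (⟨2 * i + n % 2, by have := i.isLt; omega⟩ : Fin n) *
        X (⟨2 * i + 1 + n % 2, by have := i.isLt; omega⟩ : Fin n)) +
    if h : n % 2 = 1 then C β * X (⟨0, by omega⟩ : Fin n) ^ 2 else 0

/-- `f` consists of monomials of degree at least `r`. -/
def OrderGE {k : Type*} [CommSemiring k] {σ : Type*} (f : MvPolynomial σ k) (r : ℕ) : Prop :=
  ∀ m ∈ f.support, r ≤ m.sum fun _ e => e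

/-- A homogeneous quadric `Q` defines a *nonsingular* projective quadric hypersurface:
there is no nonzero point of the quadric at which all partial derivatives vanish. -/
def SmoothQuadric {k : Type*} [CommSemiring k] {n : ℕ} (Q : MvPolynomial (Fin n) k) : Prop :=
  ∀ w : Fin n → k, w ≠ 0 → eval w Q = 0 → ∃ i, eval w (pderiv i Q) ≠ 0

/-!
If `β = 0` then `d ≥ 4`, so `4 ∣ m` and admissibility makes `T(s,q)` nonsingular; as the
quadric `x_2x_3 + ⋯ + x_{n-1}x_n` is singular at `e_1`, this forces `β₀ ≠ 0`.  The two local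
equations generate the same principal ideal, so they differ by a nonzero scalar `c` and so do
their quadratic parts.  On the germ side the quadratic part is `x_2x_3 + ⋯ + x_{n-1}x_n`,
since `y^d` has order `d ≥ 4`.  On the cover side, `φ(y)^m - y₀^m` is divisible by
`(φ(y) - y₀)^4` in characteristic `2`, so the quadratic part is `-q_{β₀}(L)`, where `L`
collects the linear parts of the `φ(x_j)`.  The linear part of the automorphism `φ` is
invertible, so `L(w) = e_1` for some `w`.  In characteristic `2` the vector `e_1` lies in the
radical of the polar form of `q_{β₀}`; comparing polar forms shows that `w` vanishes at the
coordinates `x_2, x_4, …`, whence `c β₀ = c q_{β₀}(e_1) = 0`.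
-/

theorem Ideal.pow_sub_pow_mem_pow_of_dvd {S : Type*} [CommRing S] {p : ℕ} [ExpChar S p]
    {I : Ideal S} {x y : S} (h : x - y ∈ I) {k m : ℕ} (hm : p ^ k ∣ m) :
    x ^ m - y ^ m ∈ I ^ p ^ k := by
  obtain ⟨e, rfl⟩ := hm
  rw [pow_mul, pow_mul]
  exact Ideal.mem_of_dvd _ (sub_dvd_pow_sub_pow _ _ e)
    (sub_pow_expChar_pow (p := p) x y k ▸ Ideal.pow_mem_pow h _)

namespace MvPolynomial

variable {R : Type*} [CommRing R] {σ τ : Type*}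

theorem orderGE_iff_mem_pow_idealOfVars {f : MvPolynomial σ R} {r : ℕ} :
    OrderGE f r ↔ f ∈ idealOfVars σ R ^ r :=
  (mem_pow_idealOfVars_iff r f).symm

theorem mem_idealOfVars_iff {f : MvPolynomial σ R} :
    f ∈ idealOfVars σ R ↔ constantCoeff f = 0 := by
  rw [← pow_one (idealOfVars σ R), mem_pow_idealOfVars_iff']
  simp [Finsupp.degree_eq_zero_iff, constantCoeff_eq]

theorem homogeneousComponent_eq_zero_of_mem_pow_idealOfVars {f : MvPolynomial σ R} {r j : ℕ}
    (hf : f ∈ idealOfVars σ R ^ r) (hj : j < r) : homogeneousComponent j f = 0 := by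
  ext μ
  rw [coeff_homogeneousComponent, coeff_zero]
  split_ifs with hμ
  · exact (mem_pow_idealOfVars_iff' r f).mp hf μ (hμ ▸ hj)
  · rfl

theorem homogeneousComponent_eq_of_sub_mem_pow_idealOfVars {f g : MvPolynomial σ R} {r j : ℕ}
    (h : f - g ∈ idealOfVars σ R ^ r) (hj : j < r) :
    homogeneousComponent j f = homogeneousComponent j g := by
  rw [← sub_eq_zero, ← map_sub]
  exact homogeneousComponent_eq_zero_of_mem_pow_idealOfVars h hj

theorem homogeneousComponent_mem_pow_idealOfVars (j : ℕ) (f : MvPolynomial σ R) :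
    homogeneousComponent j f ∈ idealOfVars σ R ^ j := by
  rw [mem_pow_idealOfVars_iff]
  intro μ hμ
  rw [support_homogeneousComponent, Finset.mem_filter] at hμ
  exact hμ.2.ge

theorem sub_sum_homogeneousComponent_mem_pow_idealOfVars (r : ℕ) (f : MvPolynomial σ R) :
    f - ∑ j ∈ Finset.range r, homogeneousComponent j f ∈ idealOfVars σ R ^ r := by
  rw [mem_pow_idealOfVars_iff']
  intro μ hμ
  simp [coeff_sum, coeff_homogeneousComponent, hμ]

theorem sub_homogeneousComponent_one_mem_pow_two {f : MvPolynomial σ R}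
    (hf : f ∈ idealOfVars σ R) : f - homogeneousComponent 1 f ∈ idealOfVars σ R ^ 2 := by
  have h := sub_sum_homogeneousComponent_mem_pow_idealOfVars 2 f
  rwa [Finset.sum_range_succ, Finset.sum_range_one, homogeneousComponent_zero, ← constantCoeff_eq,
    mem_idealOfVars_iff.mp hf, C_0, zero_add] at h

theorem aeval_mem_pow_idealOfVars {q : σ → MvPolynomial τ R}
    (hq : ∀ i, q i ∈ idealOfVars τ R) {f : MvPolynomial σ R} {r : ℕ}
    (hf : f ∈ idealOfVars σ R ^ r) : aeval q f ∈ idealOfVars τ R ^ r := by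
  have hI : (idealOfVars σ R).map (aeval q) ≤ idealOfVars τ R := by
    rw [Ideal.map_le_iff_le_comap, Ideal.span_le, Set.range_subset_iff]
    intro i
    simpa using hq i
  refine Ideal.pow_right_mono hI r ?_
  rw [← Ideal.map_pow]
  exact Ideal.mem_map_of_mem _ hf

theorem rename_mem_pow_idealOfVars (e : σ → τ) {f : MvPolynomial σ R} {r : ℕ}
    (hf : f ∈ idealOfVars σ R ^ r) : rename e f ∈ idealOfVars τ R ^ r := by
  rw [rename_eq_aeval]
  exact aeval_mem_pow_idealOfVars (fun _ => mem_idealOfVars_iff.mpr (constantCoeff_X _ _)) hf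

theorem homogeneousComponent_one_eq_sum [Fintype σ] (f : MvPolynomial σ R) :
    homogeneousComponent 1 f = ∑ j, C (coeff (Finsupp.single j 1) f) * X j := by
  classical
  ext μ
  simp only [coeff_homogeneousComponent, coeff_sum, coeff_C_mul, coeff_X, mul_ite, mul_one,
    mul_zero]
  split_ifs with hμ
  · obtain ⟨a, rfl⟩ := (Finsupp.sum_eq_one_iff _).mp hμ
    simp [Finsupp.single_left_inj one_ne_zero]
  · refine (Finset.sum_eq_zero fun j _ => if_neg ?_).symm
    rintro rfl
    simp at hμ

theorem homogeneousComponent_two_mul {f g : MvPolynomial σ R} (hf : f ∈ idealOfVars σ R)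
    (hg : g ∈ idealOfVars σ R) :
    homogeneousComponent 2 (f * g) = homogeneousComponent 1 f * homogeneousComponent 1 g := by
  set f₁ := homogeneousComponent 1 f
  set g₁ := homogeneousComponent 1 g
  have hf₁ : f₁ ∈ idealOfVars σ R := by
    simpa using homogeneousComponent_mem_pow_idealOfVars 1 f
  have hrest : f * g - f₁ * g₁ ∈ idealOfVars σ R ^ 3 := by
    rw [show f * g - f₁ * g₁ = (f - f₁) * g + f₁ * (g - g₁) by ring]
    refine add_mem ?_ ?_
    · rw [pow_succ]
      exact Ideal.mul_mem_mul (sub_homogeneousComponent_one_mem_pow_two hf) hg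
    · rw [pow_succ']
      exact Ideal.mul_mem_mul hf₁ (sub_homogeneousComponent_one_mem_pow_two hg)
  rw [homogeneousComponent_eq_of_sub_mem_pow_idealOfVars hrest (by norm_num)]
  exact homogeneousComponent_eq_self
    ((homogeneousComponent_isHomogeneous 1 f).mul (homogeneousComponent_isHomogeneous 1 g))

/-- The chain rule at the origin. -/
theorem coeff_single_one_aeval [Fintype σ] {q : σ → MvPolynomial τ R}
    (hq : ∀ i, q i ∈ idealOfVars τ R) (f : MvPolynomial σ R) (t : τ) :
    coeff (Finsupp.single t 1) (aeval q f) =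
      ∑ j, coeff (Finsupp.single j 1) f * coeff (Finsupp.single t 1) (q j) := by
  have h := (mem_pow_idealOfVars_iff' 2 _).mp
    (aeval_mem_pow_idealOfVars hq (sub_sum_homogeneousComponent_mem_pow_idealOfVars 2 f))
    (Finsupp.single t 1) (by simp)
  simp only [Finset.sum_range_succ, Finset.sum_range_zero, zero_add, homogeneousComponent_zero,
    homogeneousComponent_one_eq_sum, map_sub, map_add, map_sum, map_mul, aeval_C, aeval_X,
    algebraMap_eq, coeff_sub, coeff_add, coeff_sum, coeff_C_mul,
    coeff_C_of_ne_zero (Finsupp.single_ne_zero.mpr one_ne_zero), zero_add, sub_eq_zero] at h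
  exact h

theorem exists_C_mul_eq_of_span_singleton_eq {K : Type*} [Field K] {a b : MvPolynomial σ K}
    (h : Ideal.span {a} = Ideal.span {b}) : ∃ c : K, c ≠ 0 ∧ C c * a = b := by
  obtain ⟨u, hu⟩ := Ideal.span_singleton_eq_span_singleton.mp h
  obtain ⟨c, hc, hcu⟩ := isUnit_iff_eq_C_of_isReduced.mp u.isUnit
  exact ⟨c, hc.ne_zero, by rw [mul_comm, ← hcu, hu]⟩

theorem constantCoeff_algHom_apply (ψ : MvPolynomial σ R →ₐ[R] MvPolynomial τ R)
    (f : MvPolynomial σ R) :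
    constantCoeff (ψ f) = eval (fun i => constantCoeff (ψ (X i))) f := by
  show (constantCoeff.comp ψ.toRingHom) f = _
  congr 1
  exact ringHom_ext (fun r => by simp) (fun i => by simp)

/-- The Jacobian matrix at the origin. -/
noncomputable def linearPart (p : σ → MvPolynomial τ R) : Matrix σ τ R :=
  Matrix.of fun i t => coeff (Finsupp.single t 1) (p i)

theorem linearPart_mulVec_apply [Fintype τ] (p : σ → MvPolynomial τ R) (v : τ → R)
    (i : σ) :
    (linearPart p).mulVec v i = eval v (homogeneousComponent 1 (p i)) := by
  simp [linearPart, Matrix.mulVec, dotProduct, homogeneousComponent_one_eq_sum]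

theorem exists_linearPart_mul_eq_one [Fintype σ] [DecidableEq σ]
    (φ : MvPolynomial σ R ≃ₐ[R] MvPolynomial σ R) :
    ∃ N, linearPart (fun i => φ (X i)) * N = 1 := by
  set c₀ : σ → R := fun i => constantCoeff (φ (X i))
  set shift : MvPolynomial σ R →ₐ[R] MvPolynomial σ R := aeval fun i => X i + C (c₀ i)
  -- `φ⁻¹` recentred so that it fixes the origin, which makes the chain rule at `0` applicable
  set q : σ → MvPolynomial σ R := fun j => shift (φ.symm (X j))
  have hq : ∀ j, q j ∈ idealOfVars σ R := fun j => by
    have h := constantCoeff_algHom_apply (φ : MvPolynomial σ R →ₐ[R] MvPolynomial σ R)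
      (φ.symm (X j))
    simp only [AlgEquiv.coe_toAlgHom, AlgEquiv.apply_symm_apply, constantCoeff_X] at h
    rw [mem_idealOfVars_iff, constantCoeff_algHom_apply]
    simpa [shift, c₀] using h.symm
  have hinv : ∀ i, aeval q (φ (X i)) = X i + C (c₀ i) := fun i => by
    have : aeval q = shift.comp (φ.symm : MvPolynomial σ R →ₐ[R] MvPolynomial σ R) :=
      algHom_ext fun j => by simp [q]
    simp [this, shift]
  refine ⟨Matrix.of fun j t => coeff (Finsupp.single t 1) (q j), ?_⟩
  ext i t
  rw [Matrix.mul_apply, Matrix.one_apply]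
  simp only [linearPart, Matrix.of_apply]
  rw [← coeff_single_one_aeval hq, hinv]
  simp [coeff_X, coeff_C_of_ne_zero (Finsupp.single_ne_zero.mpr one_ne_zero),
    Finsupp.single_left_inj one_ne_zero]

end MvPolynomial

section StdQuad

variable {k : Type*} [CommRing k] {n : ℕ}

def stdQuadFst (i : Fin (n / 2)) : Fin n := ⟨2 * i + n % 2, by have := i.isLt; omega⟩

def stdQuadSnd (i : Fin (n / 2)) : Fin n := ⟨2 * i + 1 + n % 2, by have := i.isLt; omega⟩

theorem stdQuad_zero : stdQuad k n 0 = ∑ i, X (stdQuadFst i) * X (stdQuadSnd i) := by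
  unfold stdQuad
  split_ifs <;> simp [stdQuadFst, stdQuadSnd]

theorem stdQuad_of_odd (hn : Odd n) (β : k) :
    stdQuad k n β = stdQuad k n 0 + C β * X ⟨0, hn.pos⟩ ^ 2 := by
  rw [stdQuad_zero]
  unfold stdQuad
  rw [dif_pos (Nat.odd_iff.mp hn)]
  rfl

theorem stdQuadFst_ne_stdQuadSnd (i j : Fin (n / 2)) : stdQuadFst i ≠ stdQuadSnd j := by
  simp only [stdQuadFst, stdQuadSnd, ne_eq, Fin.mk.injEq]
  omega

theorem stdQuadSnd_injective : Function.Injective (stdQuadSnd (n := n)) := fun i j h => by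
  simp only [stdQuadSnd, Fin.mk.injEq] at h
  exact Fin.ext (by omega)

theorem stdQuadFst_ne_zero (hn : Odd n) (i : Fin (n / 2)) : stdQuadFst i ≠ ⟨0, hn.pos⟩ := by
  have := Nat.odd_iff.mp hn
  simp only [stdQuadFst, ne_eq, Fin.mk.injEq]
  omega

theorem stdQuadSnd_ne_zero (hn : Odd n) (i : Fin (n / 2)) : stdQuadSnd i ≠ ⟨0, hn.pos⟩ := by
  simp only [stdQuadSnd, ne_eq, Fin.mk.injEq]
  omega

theorem isHomogeneous_stdQuad (β : k) : (stdQuad k n β).IsHomogeneous 2 := by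
  have hpairs : (stdQuad k n 0).IsHomogeneous 2 := by
    rw [stdQuad_zero]
    exact IsHomogeneous.sum _ _ _ fun i _ => (isHomogeneous_X _ _).mul (isHomogeneous_X _ _)
  by_cases hn : Odd n
  · rw [stdQuad_of_odd hn]
    exact hpairs.add ((isHomogeneous_C _ _).mul ((isHomogeneous_X _ _).pow 2))
  · unfold stdQuad at hpairs ⊢
    rwa [dif_neg (by rwa [← Nat.odd_iff])] at hpairs ⊢

theorem eval_zero_stdQuad (β : k) : eval 0 (stdQuad k n β) = 0 := by
  rw [eval_zero, constantCoeff_eq]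
  exact (isHomogeneous_stdQuad β).coeff_eq_zero (by simp)

theorem eval_stdQuad_zero (a : Fin n → k) :
    eval a (stdQuad k n 0) = ∑ i, a (stdQuadFst i) * a (stdQuadSnd i) := by
  simp [stdQuad_zero]

theorem eval_add_single_stdQuad_zero (a : Fin n → k) (i : Fin (n / 2)) :
    eval (a + Pi.single (stdQuadSnd i) 1) (stdQuad k n 0) =
      eval a (stdQuad k n 0) + a (stdQuadFst i) := by
  have hfst : ∀ j, (Pi.single (stdQuadSnd i) 1 : Fin n → k) (stdQuadFst j) = 0 := fun j =>
    Pi.single_eq_of_ne (stdQuadFst_ne_stdQuadSnd j i) 1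
  have hsnd : ∀ j, (Pi.single (stdQuadSnd i) 1 : Fin n → k) (stdQuadSnd j) =
      if j = i then 1 else 0 := fun j => by
    simp only [Pi.single_apply, stdQuadSnd_injective.eq_iff]
  rw [eval_stdQuad_zero, eval_stdQuad_zero]
  simp only [Pi.add_apply, hfst, add_zero]
  simp only [hsnd, mul_add, mul_ite, mul_one, mul_zero]
  rw [Finset.sum_add_distrib, Finset.sum_ite_eq']
  simp

theorem eval_single_add_stdQuad [CharP k 2] (hn : Odd n) (β : k) (a : Fin n → k) :
    eval (Pi.single ⟨0, hn.pos⟩ 1 + a) (stdQuad k n β) = β + eval a (stdQuad k n β) := by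
  have hfst : ∀ i, (Pi.single ⟨0, hn.pos⟩ 1 : Fin n → k) (stdQuadFst i) = 0 := fun i =>
    Pi.single_eq_of_ne (stdQuadFst_ne_zero hn i) 1
  have hsnd : ∀ i, (Pi.single ⟨0, hn.pos⟩ 1 : Fin n → k) (stdQuadSnd i) = 0 := fun i =>
    Pi.single_eq_of_ne (stdQuadSnd_ne_zero hn i) 1
  rw [stdQuad_of_odd hn, map_add, map_add, eval_stdQuad_zero, eval_stdQuad_zero]
  simp only [Pi.add_apply, hfst, hsnd, zero_add, map_mul, map_pow, eval_C, eval_X,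
    Pi.single_eq_same, CharTwo.add_sq, one_pow]
  ring

theorem not_smoothQuadric_stdQuad_zero [Nontrivial k] (hn : Odd n) :
    ¬ SmoothQuadric (stdQuad k n 0) := by
  intro h
  have hfst : ∀ i, (Pi.single ⟨0, hn.pos⟩ 1 : Fin n → k) (stdQuadFst i) = 0 := fun i =>
    Pi.single_eq_of_ne (stdQuadFst_ne_zero hn i) 1
  have hsnd : ∀ i, (Pi.single ⟨0, hn.pos⟩ 1 : Fin n → k) (stdQuadSnd i) = 0 := fun i =>
    Pi.single_eq_of_ne (stdQuadSnd_ne_zero hn i) 1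
  obtain ⟨t, ht⟩ := h (Pi.single ⟨0, hn.pos⟩ 1) (by simp)
    (by simp [eval_stdQuad_zero, hfst])
  simp only [stdQuad_zero, map_sum, Derivation.leibniz, map_add, smul_eq_mul, map_mul, eval_X,
    hfst, hsnd, zero_mul, add_zero, Finset.sum_const_zero] at ht
  exact ht rfl

theorem homogeneousComponent_two_aeval_stdQuad {τ : Type*} (hn : Odd n)
    {P : Fin n → MvPolynomial τ k} (hP : ∀ j, P j ∈ idealOfVars τ k) (β : k) :
    homogeneousComponent 2 (aeval P (stdQuad k n β)) =
      aeval (fun j => homogeneousComponent 1 (P j)) (stdQuad k n β) := by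
  rw [stdQuad_of_odd hn, stdQuad_zero]
  simp only [map_add, map_sum, map_mul, aeval_X, aeval_C, algebraMap_eq,
    homogeneousComponent_C_mul, pow_two, homogeneousComponent_two_mul (hP _) (hP _)]

theorem mul_eq_zero_of_forall_eval_stdQuad [CharP k 2] (hn : Odd n) {V : Type*}
    [AddCommGroup V] [Module k V] (ℓ π : V →ₗ[k] Fin n → k) (hπ : Function.Surjective π)
    {w : V} (hw : ℓ w = Pi.single ⟨0, hn.pos⟩ 1) {c β : k}
    (h : ∀ v, c * eval (ℓ v) (stdQuad k n β) = eval (π v) (stdQuad k n 0)) : c * β = 0 := by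
  have hw' : eval (π w) (stdQuad k n 0) = c * β := by
    have h0 := eval_single_add_stdQuad hn β 0
    rw [add_zero, ← hw, eval_zero_stdQuad, add_zero] at h0
    rw [← h, h0]
  have hfst : ∀ i, π w (stdQuadFst i) = 0 := fun i => by
    obtain ⟨v, hv⟩ := hπ (Pi.single (stdQuadSnd i) 1)
    have hv' : c * eval (ℓ v) (stdQuad k n β) = 0 := by
      have h0 := eval_add_single_stdQuad_zero (k := k) 0 i
      rw [zero_add, ← hv, eval_zero_stdQuad, zero_add] at h0
      rw [h v, h0, Pi.zero_apply]
    have := h (w + v)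
    rwa [map_add, map_add, hw, hv, eval_single_add_stdQuad hn, mul_add, hv',
      eval_add_single_stdQuad_zero, hw', add_zero, left_eq_add] at this
  rw [← hw', eval_stdQuad_zero]
  simp [hfst]

theorem mul_eq_zero_of_C_mul_aeval_stdQuad_eq [CharP k 2] (hn : Odd n)
    {p : Fin (n + 1) → MvPolynomial (Fin (n + 1)) k} {N : Matrix (Fin (n + 1)) (Fin (n + 1)) k}
    (hN : linearPart p * N = 1) {c β : k}
    (h : C c * aeval (fun j => homogeneousComponent 1 (p (Fin.castSucc j))) (stdQuad k n β) =
      rename Fin.castSucc (stdQuad k n 0)) :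
    c * β = 0 := by
  set ℓ := LinearMap.funLeft k k Fin.castSucc ∘ₗ (linearPart p).mulVecLin
  refine mul_eq_zero_of_forall_eval_stdQuad hn ℓ (LinearMap.funLeft k k Fin.castSucc)
    (LinearMap.funLeft_surjective_of_injective k k _ (Fin.castSucc_injective n))
    (w := N.mulVec (Pi.single (Fin.castSucc ⟨0, hn.pos⟩) 1)) ?_ fun v => ?_
  · rw [LinearMap.comp_apply, Matrix.mulVecLin_apply, Matrix.mulVec_mulVec, hN,
      Matrix.one_mulVec]
    funext j
    simp [Pi.single_apply, Fin.ext_iff]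
  · have hℓ : ℓ v = fun j => eval v (homogeneousComponent 1 (p (Fin.castSucc j))) :=
      funext fun j => linearPart_mulVec_apply p v _
    change _ = eval (v ∘ Fin.castSucc) _
    rw [hℓ, ← eval_rename, ← h, map_mul, eval_C]
    exact congrArg (c * ·) (comp_aeval_apply _ (aeval v) _).symm

end StdQuad

section LocalEquations

variable {k : Type*} [Field k] {n : ℕ}

/-- The local equation `γ_e y^{ed} + ⋯ + γ_2 y^{2d} + y^d + q(x) + f` of the germ, where `y` is
the last variable. -/
noncomputable def germEquation (n d e : ℕ) (γ : ℕ → k) (β : k)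
    (f : MvPolynomial (Fin n) k) : MvPolynomial (Fin (n + 1)) k :=
  (∑ i ∈ Finset.Icc 2 e, C (γ i) * X (Fin.last n) ^ (i * d)) + X (Fin.last n) ^ d +
    rename Fin.castSucc (stdQuad k n β) + rename Fin.castSucc f

theorem homogeneousComponent_two_germEquation {d : ℕ} (hd : 3 ≤ d) (e : ℕ) (γ : ℕ → k)
    (β : k) {f : MvPolynomial (Fin n) k} (hf : OrderGE f 3) :
    homogeneousComponent 2 (germEquation n d e γ β f) = rename Fin.castSucc (stdQuad k n β) := by
  have hy : ∀ j, 3 ≤ j → (X (Fin.last n) ^ j : MvPolynomial (Fin (n + 1)) k) ∈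
      idealOfVars (Fin (n + 1)) k ^ 3 := fun j hj =>
    Ideal.pow_le_pow_right hj
      (Ideal.pow_mem_pow (mem_idealOfVars_iff.mpr (constantCoeff_X k _)) j)
  have hrest : germEquation n d e γ β f - rename Fin.castSucc (stdQuad k n β) ∈
      idealOfVars (Fin (n + 1)) k ^ 3 := by
    rw [germEquation, add_sub_right_comm, add_sub_cancel_right]
    refine add_mem (add_mem (sum_mem fun i hi => Ideal.mul_mem_left _ _ (hy _ ?_))
      (hy d hd)) (rename_mem_pow_idealOfVars _ (orderGE_iff_mem_pow_idealOfVars.mp hf))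
    nlinarith [(Finset.mem_Icc.mp hi).1]
  rw [homogeneousComponent_eq_of_sub_mem_pow_idealOfVars hrest (by norm_num)]
  exact homogeneousComponent_eq_self (isHomogeneous_stdQuad β).rename_isHomogeneous

theorem homogeneousComponent_two_map_pow_sub_rename [CharP k 2] {σ τ : Type*} (hn : Odd n)
    (ψ : MvPolynomial σ k →ₐ[k] MvPolynomial τ k) {y : σ} {ι : Fin n → σ} {y₀ : k}
    (hy : constantCoeff (ψ (X y)) = y₀) (hι : ∀ j, constantCoeff (ψ (X (ι j))) = 0)
    {m : ℕ} (hm : 4 ∣ m) (β : k) {f : MvPolynomial (Fin n) k} (hf : OrderGE f 3) :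
    homogeneousComponent 2 (ψ (X y ^ m - rename ι (C (y₀ ^ m) + stdQuad k n β + f))) =
      -aeval (fun j => homogeneousComponent 1 (ψ (X (ι j)))) (stdQuad k n β) := by
  set I := idealOfVars τ k
  have hP : ∀ j, ψ (X (ι j)) ∈ I := fun j => mem_idealOfVars_iff.mpr (hι j)
  have hpow : ψ (X y) ^ m - C (y₀ ^ m) ∈ I ^ 3 := by
    have h := Ideal.pow_sub_pow_mem_pow_of_dvd (p := 2) (k := 2) (x := ψ (X y)) (y := C y₀)
      (mem_idealOfVars_iff.mpr (by simp [hy])) hm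
    exact Ideal.pow_le_pow_right (by norm_num) (map_pow C y₀ m ▸ h)
  have hf' := aeval_mem_pow_idealOfVars hP (orderGE_iff_mem_pow_idealOfVars.mp hf)
  have hψ : ∀ F, ψ (rename ι F) = aeval (fun j => ψ (X (ι j))) F := fun F => by
    rw [rename_eq_aeval, comp_aeval_apply]
    rfl
  rw [← homogeneousComponent_two_aeval_stdQuad hn hP, ← map_neg]
  refine homogeneousComponent_eq_of_sub_mem_pow_idealOfVars ?_ (show 2 < 3 by norm_num)
  convert sub_mem hpow hf' using 1
  simp only [map_sub, map_add, hψ, map_pow, aeval_C, algebraMap_eq]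
  ring

end LocalEquations

theorem admissible_critical_point_beta_ne_zero_general {k : Type*} [Field k]
    {n m : ℕ} [CharP k 2] (hn : Odd n)
    (α β₀ : k) (f₀ : MvPolynomial (Fin n) k) (hf₀ : OrderGE f₀ 3)
    (g : MvPolynomial (Fin n) k) (hg : g = C α + stdQuad k n β₀ + f₀)
    -- … which is admissible: `T(s,q)` is nonsingular whenever `4 ∣ m`, or whenever
    -- `m ≠ 2` and `s` is singular at `q`
    (hadm₁ : 4 ∣ m → SmoothQuadric (stdQuad k n β₀))
    -- a singular point `P` of `X` over `q`, and the local defining equation of the germ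
    -- `P ∈ X` given by Lemma 3.4:
    (y₀ : k) (hy₀ : y₀ ^ m = α)
    (d e : ℕ) (γ : ℕ → k) (β : k) (f : MvPolynomial (Fin n) k)
    (φ : MvPolynomial (Fin (n + 1)) k ≃ₐ[k] MvPolynomial (Fin (n + 1)) k)
    (hd : ∃ l : ℕ, d = 2 ^ l)
    (hm' : m = d * e) (hf : OrderGE f 3)
    (hφ : ∀ i : Fin (n + 1),
      constantCoeff (φ (X i)) =
        Fin.lastCases (motive := fun _ => k) y₀ (fun _ => (0 : k)) i)
    (heq : Ideal.span {φ (X (Fin.last n) ^ m - rename Fin.castSucc g)} =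
      Ideal.span
        {(∑ i ∈ Finset.Icc 2 e, C (γ i) * X (Fin.last n) ^ (i * d)) +
          X (Fin.last n) ^ d + rename Fin.castSucc (stdQuad k n β) +
          rename Fin.castSucc f}) :
    2 < d → β ≠ 0 := by
  rintro hd2 rfl
  obtain ⟨l, rfl⟩ := hd
  have hl : 1 < l :=
    (pow_lt_pow_iff_right₀ (one_lt_two : 1 < (2 : ℕ))).mp (by rwa [pow_one] : 2 ^ 1 < 2 ^ l)
  have h4m : 4 ∣ m := hm' ▸ (Nat.pow_dvd_pow 2 hl).mul_right e
  have hβ₀ : β₀ ≠ 0 := by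
    rintro rfl
    exact not_smoothQuadric_stdQuad_zero hn (hadm₁ h4m)
  obtain ⟨c, hc, hcG⟩ := exists_C_mul_eq_of_span_singleton_eq heq
  have hcover := homogeneousComponent_two_map_pow_sub_rename hn
    (φ : MvPolynomial (Fin (n + 1)) k →ₐ[k] MvPolynomial (Fin (n + 1)) k) (y := Fin.last n)
    (ι := Fin.castSucc) (by simpa using hφ (Fin.last n))
    (fun j => by simpa using hφ j.castSucc) h4m β₀ hf₀
  simp only [AlgEquiv.coe_toAlgHom] at hcover
  have hquad := congrArg (homogeneousComponent 2) hcG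
  rw [homogeneousComponent_C_mul, hg, ← hy₀, hcover] at hquad
  change _ = homogeneousComponent 2 (germEquation n (2 ^ l) e γ 0 f) at hquad
  rw [homogeneousComponent_two_germEquation (by omega) e γ 0 hf, mul_neg, ← neg_mul,
    ← map_neg] at hquad
  obtain ⟨N, hN⟩ := exists_linearPart_mul_eq_one φ
  exact hβ₀ ((mul_eq_zero.mp (mul_eq_zero_of_C_mul_aeval_stdQuad_eq hn hN hquad)).resolve_left
    (neg_ne_zero.mpr hc))

/-- In characteristic `2` with `n` odd, for an admissible critical
point, if the local defining equation of the germ `P ∈ X` (as in the normal form of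
Lemma 3.4) has `d > 2`, then `x_1²` appears in its quadratic part with nonzero
coefficient. -/
theorem admissible_critical_point_beta_ne_zero {k : Type*} [Field k] [IsAlgClosed k]
    {n m : ℕ} [CharP k 2] (hn : Odd n) (hm : Even m) (hm0 : 0 < m)
    (α β₀ : k) (f₀ : MvPolynomial (Fin n) k) (hf₀ : OrderGE f₀ 3)
    -- `s` has an almost nondegenerate critical point at `q` (normal form), …
    (hand : f₀.coeff (Finsupp.single (⟨0, hn.pos⟩ : Fin n) 3) ≠ 0)
    (g : MvPolynomial (Fin n) k) (hg : g = C α + stdQuad k n β₀ + f₀)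
    -- … which is admissible: `T(s,q)` is nonsingular whenever `4 ∣ m`, or whenever
    -- `m ≠ 2` and `s` is singular at `q`
    (hadm₁ : 4 ∣ m → SmoothQuadric (stdQuad k n β₀))
    (hadm₂ : m ≠ 2 → α = 0 → SmoothQuadric (stdQuad k n β₀))
    -- a singular point `P` of `X` over `q`, and the local defining equation of the germ
    -- `P ∈ X` given by Lemma 3.4:
    (y₀ : k) (hy₀ : y₀ ^ m = α)
    (d e : ℕ) (γ : ℕ → k) (β : k) (f : MvPolynomial (Fin n) k)
    (φ : MvPolynomial (Fin (n + 1)) k ≃ₐ[k] MvPolynomial (Fin (n + 1)) k)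
    (hd : ∃ l : ℕ, d = 2 ^ l) (hd2 : 2 ∣ d) (he : 1 ≤ e) (heodd : Odd e)
    (hm' : m = d * e) (hf : OrderGE f 3)
    (hφ : ∀ i : Fin (n + 1),
      constantCoeff (φ (X i)) =
        Fin.lastCases (motive := fun _ => k) y₀ (fun _ => (0 : k)) i)
    (heq : Ideal.span {φ (X (Fin.last n) ^ m - rename Fin.castSucc g)} =
      Ideal.span
        {(∑ i ∈ Finset.Icc 2 e, C (γ i) * X (Fin.last n) ^ (i * d)) +
          X (Fin.last n) ^ d + rename Fin.castSucc (stdQuad k n β) +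
          rename Fin.castSucc f}) :
    2 < d → β ≠ 0 :=
  admissible_critical_point_beta_ne_zero_general hn α β₀ f₀ hf₀ g hg hadm₁ y₀ hy₀ d e γ β f φ hd hm'
    hf hφ heq
end

section
/- Let Z be a smooth variety of odd dimension n over an algebraically closed field of characteristic 2, let m be even, L a line bundle on Z, and s ∈ H^0(Z, L^m) with a critical point at q ∈ Z. Assume either 4 | m, or m > 2 and s is singular at q. Write s = g τ^m for a local generator τ of L at q and local coordinates x_1,…,x_n, with homogeneous decomposition g = α + g_1 + g_2 + ⋯ (so g_1 = 0). If τ' is another local generator of L at q, with τ = u τ' for a unit u, so that s = g'(τ')^m with g' = u^m g, then g'_2 = λ^m g_2, where λ is the nonzero constant term of u. In particular, the quadratic part g_2 of s at q is independent of the choice of local generator of L up to multiplication by a nonzero constant, so the quadric T(s, q) = (g_2 = 0) ⊂ P^{n-1} is well-defined up to isomorphism. -/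
/-!
# Statement 11

Let `Z` be a smooth variety of odd dimension `n` over an algebraically closed field `k` of
characteristic `2`, `m` even, `L` a line bundle and `s ∈ H⁰(Z, L^m)` with a critical point
at `q ∈ Z`.  Writing `s = g τ^m` in local coordinates `x_1, …, x_n` at `q` for a local
generator `τ` of `L`, and changing the generator to `τ'` with `s = g' (τ')^m`, one has
`g' = u^m g` for a unit `u` of the local ring, `u = λ + h` with `λ ≠ 0` its constant term.
The claim is that `g'_2 = λ^m g_2` for the quadratic parts, provided `g_1 = 0` and either
`4 ∣ m`, or `m > 2` and `s` is singular at `q` (i.e. additionally `g(q) = 0`).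

We model the local expressions `g` and the unit `u` by (multivariate) polynomials in the
local coordinates `x_1, …, x_n`; the point `q` is the origin.  Homogeneous parts are given
by `MvPolynomial.homogeneousComponent`, the constant term of `u` is `λ = constantCoeff u`,
and `s` being singular at `q` means `constantCoeff g = 0` (in addition to criticality
`homogeneousComponent 1 g = 0`).
-/

open MvPolynomial

section Aux

variable {k : Type*} [CommRing k] {n : ℕ}

/-- `LowVanish N p` : all coefficients of `p` on monomials of degree `< N` vanish. -/
def LowVanish (N : ℕ) (p : MvPolynomial (Fin n) k) : Prop :=
  ∀ d : Fin n →₀ ℕ, d.degree < N → coeff d p = 0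

lemma lowVanish_zero_of (N : ℕ) : LowVanish N (0 : MvPolynomial (Fin n) k) := by
  intro d _; simp

lemma Finsupp.degree_add' (a b : Fin n →₀ ℕ) :
    (a + b).degree = a.degree + b.degree := by
  simp [Finsupp.degree_eq_weight_one, map_add]

lemma lowVanish_mul {N M : ℕ} {p q : MvPolynomial (Fin n) k}
    (hp : LowVanish N p) (hq : LowVanish M q) : LowVanish (N + M) (p * q) := by
  intro d hd
  rw [coeff_mul]
  apply Finset.sum_eq_zero
  rintro ⟨d1, d2⟩ hmem
  rw [Finset.HasAntidiagonal.mem_antidiagonal] at hmem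
  have hsum : d1.degree + d2.degree < N + M := by
    rw [← Finsupp.degree_add', hmem]; exact hd
  rcases lt_or_ge d1.degree N with h1 | h1
  · rw [hp d1 h1, zero_mul]
  · have h2 : d2.degree < M := by omega
    rw [hq d2 h2, mul_zero]

lemma lowVanish_mul_right {N : ℕ} {p : MvPolynomial (Fin n) k}
    (hp : LowVanish N p) (q : MvPolynomial (Fin n) k) : LowVanish N (p * q) := by
  have := lowVanish_mul hp (M := 0) (q := q) (fun d hd => absurd hd (Nat.not_lt_zero _))
  simpa using this

lemma lowVanish_pow {N : ℕ} {p : MvPolynomial (Fin n) k} (hp : LowVanish N p) (j : ℕ) :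
    LowVanish (N * j) (p ^ j) := by
  induction j with
  | zero => intro d hd; simp at hd
  | succ j ih =>
    intro d hd
    have h2 : LowVanish (N + N * j) (p * p ^ j) := lowVanish_mul hp ih
    rw [pow_succ, mul_comm]
    exact h2 d (by rw [Nat.mul_succ] at hd; omega)

/-- Expanding `(C c + h)^M` where `h` has only monomials of degree `≥ N`: the difference
with the constant `C (c^M)` has only monomials of degree `≥ N`. -/
lemma lowVanish_pow_sub_const {N : ℕ} {h : MvPolynomial (Fin n) k}
    (hh : LowVanish N h) (hN : 0 < N) (c : k) (M : ℕ) :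
    LowVanish N ((C c + h) ^ M - C (c ^ M)) := by
  rw [add_pow]
  rw [show (Finset.range (M + 1)) = insert M (Finset.range M) by
    rw [Finset.range_add_one]]
  rw [Finset.sum_insert (by simp)]
  simp only [Nat.sub_self, pow_zero, Nat.choose_self, Nat.cast_one, mul_one, ← C_pow]
  rw [add_sub_cancel_left]
  intro d hd
  rw [coeff_sum]
  apply Finset.sum_eq_zero
  intro j hj
  rw [Finset.mem_range] at hj
  have hMj : 1 ≤ M - j := by omega
  have h1 : LowVanish (N * (M - j)) (h ^ (M - j)) := lowVanish_pow hh _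
  have h2 : LowVanish N (h ^ (M - j)) := by
    intro e he
    exact h1 e (lt_of_lt_of_le he (Nat.le_mul_of_pos_right N (by omega)))
  have h3 : coeff d (h ^ (M - j) * (C (c ^ j) * (M.choose j : MvPolynomial (Fin n) k))) = 0 :=
    lowVanish_mul_right (p := h ^ (M - j))
      (q := C (c ^ j) * (M.choose j : MvPolynomial (Fin n) k)) h2 d hd
  rw [show C (c ^ j) * h ^ (M - j) * (M.choose j : MvPolynomial (Fin n) k)
      = h ^ (M - j) * (C (c ^ j) * (M.choose j : MvPolynomial (Fin n) k)) by ring]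
  exact h3

end Aux

/-- In characteristic `2`, with `n` odd and `m` even, if `g` has vanishing
linear part at the origin (critical point) and either `4 ∣ m`, or `m > 2` and `g` also
vanishes at the origin (singular point), then for any unit `u` with nonzero constant term
`λ`, the quadratic part of `g' = u^m · g` equals `λ^m` times the quadratic part of `g`.
In particular the quadratic part of `s` at `q` is independent of the choice of local
generator of `L` up to a nonzero scalar, so the associated quadric
`T(s, q) = (g_2 = 0) ⊂ P^{n-1}` is well-defined up to isomorphism. -/
theorem quadraticPart_unit_pow_mul {k : Type*} [Field k] [IsAlgClosed k] [CharP k 2]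
    {n m : ℕ} (hn : Odd n) (hm : Even m)
    (g u : MvPolynomial (Fin n) k) (lam : k)
    (hcrit : homogeneousComponent 1 g = 0)
    (hcase : 4 ∣ m ∨ (2 < m ∧ constantCoeff g = 0))
    (hu : constantCoeff u = lam) (hlam : lam ≠ 0) :
    homogeneousComponent 2 (u ^ m * g) = lam ^ m • homogeneousComponent 2 g := by
  classical
  -- `h` is the nonconstant part of `u`
  set h : MvPolynomial (Fin n) k := u - C lam with hh_def
  have hu' : u = C lam + h := by rw [hh_def]; ring
  have hh1 : LowVanish 1 h := by
    intro d hd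
    have hd0 : d = 0 := by
      rwa [Nat.lt_one_iff, Finsupp.degree_eq_zero_iff] at hd
    subst hd0
    have : coeff 0 h = constantCoeff h := rfl
    rw [this, hh_def, map_sub, hu, constantCoeff_C, sub_self]
  have hchar : CharP (MvPolynomial (Fin n) k) 2 := inferInstance
  -- squaring in characteristic 2
  haveI : Fact (Nat.Prime 2) := ⟨by norm_num⟩
  have hsq : ∀ (a b : MvPolynomial (Fin n) k), (a + b) ^ 2 = a ^ 2 + b ^ 2 := by
    intro a b
    exact add_pow_char (p := 2) a b
  -- the key: `w := u^m - C (lam^m)` has low-vanishing of order 2 (resp. 4 when 4 ∣ m)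
  set w : MvPolynomial (Fin n) k := u ^ m - C (lam ^ m) with hw_def
  have key : homogeneousComponent 2 (w * g) = 0 := by
    have main : ∀ d : Fin n →₀ ℕ, d.degree = 2 → coeff d (w * g) = 0 := by
      intro d hd
      rcases hcase with h4 | ⟨hm2, hg0⟩
      · -- case 4 ∣ m : w has only monomials of degree ≥ 4
        obtain ⟨M, hM⟩ := h4
        have hu4 : u ^ 4 = C (lam ^ 4) + h ^ 4 := by
          have h2 : u ^ 2 = C lam ^ 2 + h ^ 2 := by rw [hu']; exact hsq _ _
          calc u ^ 4 = (u ^ 2) ^ 2 := by ring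
            _ = (C lam ^ 2) ^ 2 + (h ^ 2) ^ 2 := by rw [h2]; exact hsq _ _
            _ = C (lam ^ 4) + h ^ 4 := by rw [C_pow]; ring
        have hh4 : LowVanish 4 (h ^ 4) := by
          have := lowVanish_pow hh1 4; simpa using this
        have hw4 : LowVanish 4 w := by
          have := lowVanish_pow_sub_const hh4 (by norm_num) (lam ^ 4) M
          rw [← hu4] at this
          have heq : (u ^ 4) ^ M - C ((lam ^ 4) ^ M) = w := by
            rw [hw_def, ← pow_mul, ← pow_mul, ← hM]
          rwa [heq] at this
        have : LowVanish 4 (w * g) := lowVanish_mul_right hw4 g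
        exact this d (by omega)
      · -- case m > 2 and g singular at the origin
        obtain ⟨M, hM⟩ := hm
        have hM' : m = 2 * M := by omega
        have hu2 : u ^ 2 = C (lam ^ 2) + h ^ 2 := by
          rw [hu', C_pow]; exact hsq _ _
        have hh2 : LowVanish 2 (h ^ 2) := by
          have := lowVanish_pow hh1 2; simpa using this
        have hw2 : LowVanish 2 w := by
          have := lowVanish_pow_sub_const hh2 (by norm_num) (lam ^ 2) M
          rw [← hu2] at this
          have heq : (u ^ 2) ^ M - C ((lam ^ 2) ^ M) = w := by
            rw [hw_def, ← pow_mul, ← pow_mul, ← hM']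
          rwa [heq] at this
        rw [coeff_mul]
        apply Finset.sum_eq_zero
        rintro ⟨d1, d2⟩ hmem
        rw [Finset.HasAntidiagonal.mem_antidiagonal] at hmem
        have hsum : d1.degree + d2.degree = 2 := by
          rw [← Finsupp.degree_add', hmem, hd]
        rcases lt_or_ge d1.degree 2 with h1 | h1
        · rw [hw2 d1 h1, zero_mul]
        · have h2 : d2.degree = 0 := by omega
          have hd2 : d2 = 0 := by rwa [Finsupp.degree_eq_zero_iff] at h2
          subst hd2
          have : coeff 0 g = constantCoeff g := rfl
          rw [this, hg0, mul_zero]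
    ext d
    rw [coeff_homogeneousComponent, coeff_zero]
    split_ifs with hd
    · exact main d hd
    · rfl
  have expand : u ^ m * g = C (lam ^ m) * g + w * g := by
    rw [hw_def]; ring
  rw [expand, map_add, key, add_zero, ← smul_eq_C_mul, map_smul]
end

section
/- Let Z be a smooth variety of dimension n over an algebraically closed field k of characteristic p > 0, m a positive integer with p | m, L a line bundle on Z, s ∈ H^0(Z, L^m), and X = Z[ᵐ√s] with covering morphism π: X → Z. Then the singular locus of X equals the preimage under π of the set of critical points of s: Sing X = π^{-1}(Crit(s)). -/
/-!
Since `p ∣ m`, the term `y^m` of the equation `y^m - g` has zero derivative, so the gradient of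
the equation at `(x, y)` is minus the gradient of `g` at `x`, padded with a zero in the
`y`-direction.
-/

open MvPolynomial

namespace MvPolynomial

variable {R σ : Type*} [CommSemiring R]

theorem pderiv_pow_eq_zero_of_charP_dvd {p m : ℕ} [CharP R p] (hpm : p ∣ m) (i : σ)
    (f : MvPolynomial σ R) : pderiv i (f ^ m) = 0 := by
  rw [pderiv_pow, (CharP.cast_eq_zero_iff (MvPolynomial σ R) p m).mpr hpm, zero_mul, zero_mul]

theorem pderiv_rename_eq_zero_of_notMem_range {τ : Type*} {f : σ → τ} {i : τ}
    (hi : i ∉ Set.range f) (g : MvPolynomial σ R) : pderiv i (rename f g) = 0 := by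
  classical
  refine pderiv_eq_zero_of_notMem_vars fun hmem => ?_
  obtain ⟨j, -, rfl⟩ := Finset.mem_image.mp (vars_rename f g hmem)
  exact hi ⟨j, rfl⟩

theorem forall_eval_pderiv_rename_castSucc_eq_zero_iff {n : ℕ} (g : MvPolynomial (Fin n) R)
    (P : Fin (n + 1) → R) :
    (∀ i, eval P (pderiv i (rename Fin.castSucc g)) = 0) ↔
      ∀ j, eval (P ∘ Fin.castSucc) (pderiv j g) = 0 := by
  have hlast : Fin.last n ∉ Set.range Fin.castSucc := by simp
  simp only [Fin.forall_fin_succ', pderiv_rename (Fin.castSucc_injective n), eval_rename,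
    pderiv_rename_eq_zero_of_notMem_range hlast, map_zero, and_true]

end MvPolynomial

theorem singularLocus_cyclic_cover_general {k : Type*} [Field k] {p m n : ℕ}
    [CharP k p] (hpm : p ∣ m)
    (g : MvPolynomial (Fin n) k)
    -- the defining equation `y^m - g` of `X` in `𝔸^{n+1}`, `y` being the last variable
    (F : MvPolynomial (Fin (n + 1)) k)
    (hF : F = X (Fin.last n) ^ m - rename Fin.castSucc g)
    -- the covering map `π : X → Z` (restriction of the projection to `X`)
    (π : (Fin (n + 1) → k) → (Fin n → k)) (hπ : ∀ P, π P = P ∘ Fin.castSucc) :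
    -- `Sing X = π⁻¹(Crit s)` (inside `X`)
    {P : Fin (n + 1) → k | eval P F = 0 ∧ ∀ i, eval P (pderiv i F) = 0} =
      {P : Fin (n + 1) → k | eval P F = 0} ∩
        π ⁻¹' {q : Fin n → k | ∀ i, eval q (pderiv i g) = 0} := by
  have hderiv : ∀ i, pderiv i F = -pderiv i (rename Fin.castSucc g) := fun i => by
    rw [hF, map_sub, pderiv_pow_eq_zero_of_charP_dvd hpm, zero_sub]
  ext P
  simp only [Set.mem_ofPred_eq, Set.mem_inter_iff, Set.mem_preimage, hπ, hderiv, eval_neg,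
    neg_eq_zero, forall_eval_pderiv_rename_castSucc_eq_zero_iff]

/-- For `X = Z[ᵐ√s] = (y^m - g(x) = 0) ⊆ 𝔸^{n+1}` in characteristic
`p ∣ m`, the singular locus of `X` equals the preimage under `π : X → Z` of the critical
locus of `s`. -/
theorem singularLocus_cyclic_cover {k : Type*} [Field k] [IsAlgClosed k] {p m n : ℕ}
    [CharP k p] (hp : p.Prime) (hpm : p ∣ m) (hm : 0 < m)
    (g : MvPolynomial (Fin n) k)
    -- the defining equation `y^m - g` of `X` in `𝔸^{n+1}`, `y` being the last variable
    (F : MvPolynomial (Fin (n + 1)) k)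
    (hF : F = X (Fin.last n) ^ m - rename Fin.castSucc g)
    -- the covering map `π : X → Z` (restriction of the projection to `X`)
    (π : (Fin (n + 1) → k) → (Fin n → k)) (hπ : ∀ P, π P = P ∘ Fin.castSucc) :
    -- `Sing X = π⁻¹(Crit s)` (inside `X`)
    {P : Fin (n + 1) → k | eval P F = 0 ∧ ∀ i, eval P (pderiv i F) = 0} =
      {P : Fin (n + 1) → k | eval P F = 0} ∩
        π ⁻¹' {q : Fin n → k | ∀ i, eval q (pderiv i g) = 0} :=
  singularLocus_cyclic_cover_general hpm g F hF π hπ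
end
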